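/- arXiv:1405.2293 — 2 statements merged into one kernel-verified Lean document; each statement's English description precedes it below -/
import Mathlib

section
/- Let G be a group, H a subgroup of G, ξ ∈ G, and a, b integers with a + b ≠ 0. If ξᵃHξᵇ ⊆ H, then ξᵃHξᵇ = H. -/
/-!
Put `g = ξ ^ a`. Then `ξ ^ a * h * ξ ^ b = g * h * g⁻¹ * ξ ^ (a + b)`, and `ξ ^ (a + b) ∈ H`
(take `h = 1`), so conjugation by `g` maps `H` into `H`; moreover `g ^ (a + b) = (ξ ^ (a + b)) ^ a`
lies in `H`. Conjugation by `g⁻¹ = g ^ (m - 1) * (g ^ m)⁻¹`, where `m = |a + b| ≥ 1`, is then the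
composite of conjugation by the element `(g ^ m)⁻¹` of `H` and `m - 1` conjugations by `g`, so it
maps `H` into `H` too. Hence `H ⊆ g * H * g⁻¹ * ξ ^ (a + b)`.
-/

namespace Subgroup

variable {G : Type*} [Group G] (H : Subgroup G) {g : G}

theorem pow_mul_mul_inv_pow_mem (hconj : ∀ h ∈ H, g * h * g⁻¹ ∈ H) (m : ℕ) {h : G}
    (hh : h ∈ H) : g ^ m * h * (g ^ m)⁻¹ ∈ H := by
  induction m with
  | zero => simpa using hh
  | succ k ih =>
    have := hconj _ ih
    rwa [show g * (g ^ k * h * (g ^ k)⁻¹) * g⁻¹ = g ^ (k + 1) * h * (g ^ (k + 1))⁻¹ by group]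
      at this

theorem exists_pow_succ_mem_of_zpow_mem {n : ℤ} (hn : n ≠ 0) (hgn : g ^ n ∈ H) :
    ∃ k : ℕ, g ^ (k + 1) ∈ H := by
  refine ⟨n.natAbs - 1, ?_⟩
  rw [Nat.sub_add_cancel (Int.natAbs_pos.mpr hn)]
  rcases Int.natAbs_eq n with e | e <;> rw [e] at hgn
  · exact_mod_cast hgn
  · simpa only [zpow_neg, inv_mem_iff, zpow_natCast] using hgn

theorem inv_mul_mul_mem_of_zpow_mem (hconj : ∀ h ∈ H, g * h * g⁻¹ ∈ H) {n : ℤ} (hn : n ≠ 0)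
    (hgn : g ^ n ∈ H) {h : G} (hh : h ∈ H) : g⁻¹ * h * g ∈ H := by
  obtain ⟨k, hgk⟩ := H.exists_pow_succ_mem_of_zpow_mem hn hgn
  have := H.pow_mul_mul_inv_pow_mem hconj k (H.mul_mem (H.mul_mem (H.inv_mem hgk) hh) hgk)
  rwa [show g ^ k * ((g ^ (k + 1))⁻¹ * h * g ^ (k + 1)) * (g ^ k)⁻¹ = g⁻¹ * h * g by group]
    at this

end Subgroup

/-- For integers `a`, `b` with `a + b ≠ 0`, the condition `ξᵃHξᵇ ⊆ H`
implies `ξᵃHξᵇ = H`. -/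
theorem stmt_3 {G : Type*} [Group G] (H : Subgroup G) (ξ : G) (a b : ℤ)
    (hab : a + b ≠ 0)
    (hsub : (fun h => ξ ^ a * h * ξ ^ b) '' (H : Set G) ⊆ (H : Set G)) :
    (fun h => ξ ^ a * h * ξ ^ b) '' (H : Set G) = (H : Set G) := by
  have hmem : ∀ h ∈ H, ξ ^ a * h * ξ ^ b ∈ H := fun h hh => hsub ⟨h, hh, rfl⟩
  have hsum : ξ ^ (a + b) ∈ H := by simpa [zpow_add] using hmem 1 H.one_mem
  have hconj : ∀ h ∈ H, ξ ^ a * h * (ξ ^ a)⁻¹ ∈ H := fun h hh => by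
    have := H.mul_mem (hmem h hh) (H.inv_mem hsum)
    rwa [show ξ ^ a * h * ξ ^ b * (ξ ^ (a + b))⁻¹ = ξ ^ a * h * (ξ ^ a)⁻¹ by group] at this
  have hpow : (ξ ^ a) ^ (a + b) ∈ H := by
    rw [← zpow_mul, mul_comm, zpow_mul]
    exact H.zpow_mem hsum a
  refine hsub.antisymm fun x hx => ⟨(ξ ^ a)⁻¹ * x * ξ ^ a * (ξ ^ (a + b))⁻¹, ?_, by group⟩
  exact H.mul_mem (H.inv_mul_mul_mem_of_zpow_mem hconj hab hpow hx) (H.inv_mem hsum)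
end

section
/- Let k be a field and x₁, …, x_n distinct elements of k with n ≥ 3. Suppose that the only solutions of x_i − x_j = x_k − x_l with indices in {1,…,n} are the trivial ones (i = k, j = l, or i = j and k = l). Then for any α ∈ k, if the set {x₁,…,x_n} is invariant under the map x ↦ α − x, a contradiction arises; i.e., no α exists with {α − x₁, …, α − x_n} = {x₁, …, x_n}. -/
/-! If `x ↦ α - x` permuted the roots, writing `σ` for the induced permutation of indices, every
pair `i ≠ j` would give the relation `x i - x (σ j) = x j - x (σ i)`. The Sidon condition leaves
only the trivial solution `σ j = i`, so `σ j` would equal every index other than `j`, which is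
impossible once there are three indices. -/

section SidonReflection

variable {G ι : Type*} [AddCommGroup G] {x : ι → G}
  (hsidon : ∀ i j k l : ι, x i - x j = x k - x l → (i = k ∧ j = l) ∨ (i = j ∧ k = l))
include hsidon

theorem eq_of_reflect_eq_of_sidon {α : G} {i j i' j' : ι} (hij : i ≠ j)
    (hi' : x i' = α - x i) (hj' : x j' = α - x j) : j' = i := by
  have hrel : x i - x j' = x j - x i' := by rw [hi', hj']; abel
  rcases hsidon _ _ _ _ hrel with ⟨hij', -⟩ | ⟨hij', -⟩
  · exact absurd hij' hij
  · exact hij'.symm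

theorem not_reflect_mem_range_of_sidon {a b c : ι} (hab : a ≠ b) (hcb : c ≠ b) (hac : a ≠ c)
    (α : G) : ¬ ∀ i, α - x i ∈ Set.range x := by
  intro hmem
  obtain ⟨a', ha'⟩ := hmem a
  obtain ⟨b', hb'⟩ := hmem b
  obtain ⟨c', hc'⟩ := hmem c
  exact hac <| (eq_of_reflect_eq_of_sidon hsidon hab ha' hb').symm.trans
    (eq_of_reflect_eq_of_sidon hsidon hcb hc' hb')

end SidonReflection

theorem stmt_18_general {k : Type*} [Field k] (n : ℕ) (hn : 3 ≤ n)
    (x : Fin n → k)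
    (hsidon : ∀ i j K l : Fin n, x i - x j = x K - x l →
      (i = K ∧ j = l) ∨ (i = j ∧ K = l)) :
    ∀ α : k, ¬ ((fun t => α - t) '' Set.range x = Set.range x) := by
  intro α hinv
  refine not_reflect_mem_range_of_sidon hsidon (a := ⟨0, by omega⟩) (b := ⟨1, by omega⟩)
    (c := ⟨2, by omega⟩) (by simp) (by simp) (by simp) α fun i => ?_
  rw [← hinv]
  exact Set.mem_image_of_mem _ (Set.mem_range_self i)

/-- If `x₁, …, x_n` (`n ≥ 3`) are distinct elements of a field satisfying the
Sidon-type condition (only trivial solutions of `x_i − x_j = x_k − x_l`), then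
the set `{x₁,…,x_n}` is not invariant under any map `x ↦ α − x`. -/
theorem stmt_18 {k : Type*} [Field k] (n : ℕ) (hn : 3 ≤ n)
    (x : Fin n → k) (hinj : Function.Injective x)
    (hsidon : ∀ i j K l : Fin n, x i - x j = x K - x l →
      (i = K ∧ j = l) ∨ (i = j ∧ K = l)) :
    ∀ α : k, ¬ ((fun t => α - t) '' Set.range x = Set.range x) :=
  stmt_18_general n hn x hsidon
end
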